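/- Let R be a simplicial commutative F₂-algebra, let 2 ≤ i ≤ q, and let z ∈ R_q satisfy d_j(z) = 0 for all 0 ≤ j ≤ q. Then μ(D^{q−i}_{q,q}(z⊗z)) = δ_i(z) in R_{q+i}, where μ : R_{q+i}⊗R_{q+i} → R_{q+i} is the multiplication and D^{q−i} is the higher Eilenberg–MacLane map applied to the underlying simplicial F₂-vector space of R in both tensor factors. In other words, Dwyer's representative Θ_i(z) = μD^{q−i}(z⊗z) + μD^{q−i−1}(z⊗∂z) of the homotopy operation δ_i on a normalized cycle z is given by the explicit formula δ_i(z) = Σ_{(μ,ν)∈V(q,i)} s_{ν_i}⋯s_{ν_1}(z)·s_{μ_i}⋯s_{μ_1}(z). -/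

import Mathlib

open scoped TensorProduct

noncomputable section

/-- A (possibly degenerate) collection of data for a simplicial `F₂`-vector space:
a family of `ZMod 2`-modules together with face maps `d n j : X n → X (n-1)`
and degeneracy maps `s n j : X n → X (n+1)`.  The simplicial identities are
required via the predicate `SVS.IsSimplicial` below. -/
structure SVS : Type 1 where
  X : ℕ → Type
  grp : ∀ n, AddCommGroup (X n)
  mod : ∀ n, Module (ZMod 2) (X n)
  d : ∀ n, ℕ → (X n →ₗ[ZMod 2] X (n - 1))
  s : ∀ n, ℕ → (X n →ₗ[ZMod 2] X (n + 1))

attribute [instance] SVS.grp SVS.mod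

namespace SVS

/-- Transport along an equality of degrees. -/
def xcast (V : SVS) {m n : ℕ} (h : m = n) : V.X m →ₗ[ZMod 2] V.X n := by
  subst h; exact LinearMap.id

/-- The simplicial identities, in the (complete) ranges where both sides make sense. -/
structure IsSimplicial (V : SVS) : Prop where
  dd : ∀ n i j, i < j → j ≤ n + 2 →
    (V.d (n+1) i).comp (V.d (n+2) j) = (V.d (n+1) (j-1)).comp (V.d (n+2) i)
  ss : ∀ n i j, i ≤ j → j ≤ n →
    (V.s (n+1) i).comp (V.s n j) = (V.s (n+1) (j+1)).comp (V.s n i)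
  ds_lt : ∀ n i j, i < j → j ≤ n + 1 →
    (V.d (n+2) i).comp (V.s (n+1) j) = (V.s n (j-1)).comp (V.d (n+1) i)
  ds_eq : ∀ n i j, (i = j ∨ i = j + 1) → j ≤ n →
    (V.d (n+1) i).comp (V.s n j) = LinearMap.id
  ds_gt : ∀ n i j, j + 1 < i → i ≤ n + 2 →
    (V.d (n+2) i).comp (V.s (n+1) j) = (V.s n j).comp (V.d (n+1) (i-1))

/-- The suspension `S(V)`, with `S(V)_n = V_{n+1}`, `d_j = d_{j+1}`, `s_j = s_{j+1}`. -/
def susp (V : SVS) : SVS where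
  X := fun n => V.X (n+1)
  grp := fun n => V.grp (n+1)
  mod := fun n => V.mod (n+1)
  d := fun n => match n with
    | 0 => fun _ => 0
    | m+1 => fun j => V.d (m+2) (j+1)
  s := fun n j => V.s (n+1) (j+1)

/-- The `k`-fold suspension `S^k(V)`, with `S^k(V)_n = V_{n+k}`, `d_j = d_{j+k}`,
`s_j = s_{j+k}`.  Evaluating a natural transformation at `shift V k` realizes its
`k`-fold suspension ("replace every `d_r` by `d_{r+k}` and every `s_r` by `s_{r+k}`"). -/
def shift (V : SVS) (k : ℕ) : SVS where
  X := fun n => V.X (n+k)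
  grp := fun n => V.grp (n+k)
  mod := fun n => V.mod (n+k)
  d := fun n j =>
    if h : 1 ≤ n then (V.xcast (by omega)).comp (V.d (n+k) (j+k)) else 0
  s := fun n j => (V.xcast (by omega)).comp (V.s (n+k) (j+k))

end SVS

/-- A simplicial map (morphism of simplicial `F₂`-vector spaces). -/
structure SMap (V W : SVS) where
  f : ∀ n, V.X n →ₗ[ZMod 2] W.X n
  comm_d : ∀ n j, j ≤ n + 1 →
    (f n).comp (V.d (n+1) j) = (W.d (n+1) j).comp (f (n+1))
  comm_s : ∀ n j, j ≤ n →
    (f (n+1)).comp (V.s n j) = (W.s n j).comp (f n)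

/-- Iterated degeneracies: `sIter V [a₁, …, aᵣ] q = s_{aᵣ} ∘ ⋯ ∘ s_{a₁}` applied from degree `q`
(the head of the list is applied first). -/
def sIter (V : SVS) : (l : List ℕ) → (q : ℕ) → (V.X q →ₗ[ZMod 2] V.X (q + l.length))
  | [], _ => LinearMap.id
  | a :: t, q =>
    (V.xcast (show q + 1 + t.length = q + (t.length + 1) by omega)).comp
      ((sIter V t (q+1)).comp (V.s q a))

/-- Iterated degeneracies, with the target degree given explicitly. -/
def sIterTo (V : SVS) (q m : ℕ) (l : List ℕ) (h : q + l.length = m) :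
    V.X q →ₗ[ZMod 2] V.X m :=
  (V.xcast h).comp (sIter V l q)

/-- `V_a ⊗ W_b` over `F₂`. -/
abbrev TT (V W : SVS) (a b : ℕ) : Type :=
  TensorProduct (ZMod 2) (V.X a) (W.X b)

/-- Transport of tensor products along equalities of degrees. -/
def tcast (V W : SVS) {a b c e : ℕ} (h1 : a = c) (h2 : b = e) :
    TT V W a b →ₗ[ZMod 2] TT V W c e :=
  TensorProduct.map (V.xcast h1) (W.xcast h2)

/-- The twist `T : V_a ⊗ W_b → W_b ⊗ V_a`. -/
def twist (V W : SVS) (a b : ℕ) : TT V W a b →ₗ[ZMod 2] TT W V b a :=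
  (TensorProduct.comm (ZMod 2) _ _).toLinearMap

/-- `(i,j)`-shuffles, encoded as pairs `(μ, ν)` of subsets of `{0, …, i+j-1}` with
`μ.card = i`, `ν.card = j`, disjoint with union everything; the increasing enumeration
of a set gives the corresponding increasing sequence. -/
def shuffles (i j : ℕ) : Finset (Finset ℕ × Finset ℕ) :=
  ((Finset.range (i+j)).powersetCard i ×ˢ (Finset.range (i+j)).powersetCard j).filter
    fun p => Disjoint p.1 p.2 ∧ p.1 ∪ p.2 = Finset.range (i+j)

lemma shuffles_card₁ {i j : ℕ} {p : Finset ℕ × Finset ℕ} (hp : p ∈ shuffles i j) :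
    p.1.card = i := by
  simp only [shuffles, Finset.mem_filter, Finset.mem_product, Finset.mem_powersetCard] at hp
  exact hp.1.1.2

lemma shuffles_card₂ {i j : ℕ} {p : Finset ℕ × Finset ℕ} (hp : p ∈ shuffles i j) :
    p.2.card = j := by
  simp only [shuffles, Finset.mem_filter, Finset.mem_product, Finset.mem_powersetCard] at hp
  exact hp.1.2.2

/-- The increasing enumeration of a finite set of naturals. -/
def sortAsc (s : Finset ℕ) : List ℕ := s.sort (· ≤ ·)

lemma length_sortAsc (s : Finset ℕ) : (sortAsc s).length = s.card :=
  Finset.length_sort _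

/-- The Eilenberg–MacLane shuffle map
`D_{i,j} = Σ_{(i,j)-shuffles (μ,ν)} (s_{ν_j}⋯s_{ν_1}) ⊗ (s_{μ_i}⋯s_{μ_1}) :
V_i ⊗ W_j → V_{i+j} ⊗ W_{i+j}`. -/
def Dmap (V W : SVS) (i j : ℕ) : TT V W i j →ₗ[ZMod 2] TT V W (i+j) (i+j) :=
  ∑ p ∈ (shuffles i j).attach,
    TensorProduct.map
      (sIterTo V i (i+j) (sortAsc p.1.2) (by rw [length_sortAsc, shuffles_card₂ p.2]))
      (sIterTo W j (i+j) (sortAsc p.1.1) (by rw [length_sortAsc, shuffles_card₁ p.2]; omega))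

open SVS in
/-- `D⁰_{i,j} = S(D_{i-1,j}) ∘ (id ⊗ s₀)`, zero when `i = 0`. -/
def D0 (V W : SVS) : (i j : ℕ) → (TT V W i j →ₗ[ZMod 2] TT V W (i+j) (i+j))
  | 0, _ => 0
  | i'+1, j =>
    (tcast V W (show i'+j+1 = i'+1+j by omega) (show i'+j+1 = i'+1+j by omega)).comp
      ((Dmap (susp V) (susp W) i' j).comp
        (TensorProduct.map LinearMap.id (W.s j 0)))

open SVS in
/-- The higher Eilenberg–MacLane maps `D^k_{i,j} : V_i ⊗ W_j → V_{i+j-k} ⊗ W_{i+j-k}`,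
defined recursively: `D^0` as above, and for `k ≥ 1`,
`D^k_{i,j} = S(D^{k-1}_{i-1,j-1}) + D^{k-1}_{i-1,j}∘(d₀⊗id)` (`k` even),
`D^k_{i,j} = S(D^{k-1}_{i-1,j-1}) + D^{k-1}_{i,j-1}∘(id⊗d₀)` (`k` odd);
any term involving a negative index is zero. -/
def Dk : (k : ℕ) → (V W : SVS) → (i j : ℕ) →
    (TT V W i j →ₗ[ZMod 2] TT V W (i+j-k) (i+j-k))
  | 0, V, W, i, j => D0 V W i j
  | k+1, V, W, i, j =>
    (match i, j with
     | i'+1, j'+1 =>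
       if h : k ≤ i' + j' then
         (tcast V W (show i'+j'-k+1 = i'+1+(j'+1)-(k+1) by omega)
            (show i'+j'-k+1 = i'+1+(j'+1)-(k+1) by omega)).comp
           (Dk k (susp V) (susp W) i' j')
       else 0
     | _, _ => 0)
    +
    (if (k+1) % 2 = 0 then
      (match i with
       | 0 => 0
       | i'+1 =>
         (tcast V W (show i'+j-k = i'+1+j-(k+1) by omega)
            (show i'+j-k = i'+1+j-(k+1) by omega)).comp
           ((Dk k V W i' j).comp (TensorProduct.map (V.d (i'+1) 0) LinearMap.id)))
     else
      (match j with
       | 0 => 0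
       | j'+1 =>
         (tcast V W (show i+j'-k = i+(j'+1)-(k+1) by omega)
            (show i+j'-k = i+(j'+1)-(k+1) by omega)).comp
           ((Dk k V W i j').comp (TensorProduct.map LinearMap.id (W.d (j'+1) 0)))))

/-- `φ_k : V_i ⊗ W_j → V_{i+j-k} ⊗ W_{i+j-k}`: the identity if `i = j = k`, zero otherwise. -/
def phi (V W : SVS) (k i j : ℕ) : TT V W i j →ₗ[ZMod 2] TT V W (i+j-k) (i+j-k) :=
  if h : i = k ∧ j = k then
    tcast V W (show i = i+j-k by rcases h with ⟨h1, h2⟩; omega)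
      (show j = i+j-k by rcases h with ⟨h1, h2⟩; omega)
  else 0

/-- `∂ ⊗ id = Σ_{0 ≤ r ≤ a} d_r ⊗ id : V_a ⊗ W_b → V_{a-1} ⊗ W_b`. -/
def bdryL (V W : SVS) (a b : ℕ) : TT V W a b →ₗ[ZMod 2] TT V W (a-1) b :=
  ∑ r ∈ Finset.range (a+1), TensorProduct.map (V.d a r) LinearMap.id

/-- `id ⊗ ∂ = Σ_{0 ≤ r ≤ b} id ⊗ d_r : V_a ⊗ W_b → V_a ⊗ W_{b-1}`. -/
def bdryR (V W : SVS) (a b : ℕ) : TT V W a b →ₗ[ZMod 2] TT V W a (b-1) :=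
  ∑ r ∈ Finset.range (b+1), TensorProduct.map LinearMap.id (W.d b r)

/-- `δ = Σ_{0 ≤ r ≤ min a b} d_r ⊗ d_r : V_a ⊗ W_b → V_{a-1} ⊗ W_{b-1}`. -/
def delMap (V W : SVS) (a b : ℕ) : TT V W a b →ₗ[ZMod 2] TT V W (a-1) (b-1) :=
  ∑ r ∈ Finset.range (min a b + 1), TensorProduct.map (V.d a r) (W.d b r)

/-- The twisted map `T ∘ D⁰_{j,i} ∘ T : V_i ⊗ W_j → V_{i+j} ⊗ W_{i+j}`
(`D⁰_{j,i}` evaluated on the pair `(W, V)`). -/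
def TD0T (V W : SVS) (i j : ℕ) : TT V W i j →ₗ[ZMod 2] TT V W (i+j) (i+j) :=
  (tcast V W (show j+i = i+j by omega) (show j+i = i+j by omega)).comp
    ((twist W V (j+i) (j+i)).comp ((D0 W V j i).comp (twist V W i j)))

/-- The twisted map `T ∘ D^k_{j,i} ∘ T : V_i ⊗ W_j → V_{i+j-k} ⊗ W_{i+j-k}`. -/
def TDkT (k : ℕ) (V W : SVS) (i j : ℕ) : TT V W i j →ₗ[ZMod 2] TT V W (i+j-k) (i+j-k) :=
  (tcast V W (show j+i-k = i+j-k by omega) (show j+i-k = i+j-k by omega)).comp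
    ((twist W V (j+i-k) (j+i-k)).comp ((Dk k W V j i).comp (twist V W i j)))

open SVS in
/-- `A⁰ = D⁰ + TD⁰T + D`, and for `k ≥ 1`
`A^k = D^k + TD^kT + δ∘D^{k-1} + D^{k-1}∘(∂⊗id) + D^{k-1}∘(id⊗∂)`
(terms with a negative index being zero). -/
def Ak : (k : ℕ) → (V W : SVS) → (i j : ℕ) →
    (TT V W i j →ₗ[ZMod 2] TT V W (i+j-k) (i+j-k))
  | 0, V, W, i, j => D0 V W i j + TD0T V W i j + Dmap V W i j
  | k+1, V, W, i, j =>
    Dk (k+1) V W i j + TDkT (k+1) V W i j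
    + (tcast V W (show i+j-k-1 = i+j-(k+1) by omega)
        (show i+j-k-1 = i+j-(k+1) by omega)).comp
        ((delMap V W (i+j-k) (i+j-k)).comp (Dk k V W i j))
    + (match i with
       | 0 => 0
       | i'+1 =>
         (tcast V W (show i'+j-k = i'+1+j-(k+1) by omega)
            (show i'+j-k = i'+1+j-(k+1) by omega)).comp
           ((Dk k V W i' j).comp (bdryL V W (i'+1) j)))
    + (match j with
       | 0 => 0
       | j'+1 =>
         (tcast V W (show i+j'-k = i+(j'+1)-(k+1) by omega)
            (show i+j'-k = i+(j'+1)-(k+1) by omega)).comp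
           ((Dk k V W i j').comp (bdryR V W i (j'+1))))

open SVS in
/-- The suspension term `S(A^k_{i-1,j-1}) : V_i ⊗ W_j → V_{i+j-(k+1)} ⊗ W_{i+j-(k+1)}`
(zero if a negative index occurs). -/
def AsuspTerm (k : ℕ) (V W : SVS) (i j : ℕ) :
    TT V W i j →ₗ[ZMod 2] TT V W (i+j-(k+1)) (i+j-(k+1)) :=
  match i, j with
  | i'+1, j'+1 =>
    if h : k ≤ i' + j' then
      (tcast V W (show i'+j'-k+1 = i'+1+(j'+1)-(k+1) by omega)
         (show i'+j'-k+1 = i'+1+(j'+1)-(k+1) by omega)).comp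
        (Ak k (susp V) (susp W) i' j')
    else 0
  | _, _ => 0

/-- The term `A^k_{i-1,j} ∘ (d₀ ⊗ id) : V_i ⊗ W_j → V_{i+j-(k+1)} ⊗ W_{i+j-(k+1)}`
(zero if `i = 0`). -/
def Ad0Term (k : ℕ) (V W : SVS) (i j : ℕ) :
    TT V W i j →ₗ[ZMod 2] TT V W (i+j-(k+1)) (i+j-(k+1)) :=
  match i with
  | 0 => 0
  | i'+1 =>
    (tcast V W (show i'+j-k = i'+1+j-(k+1) by omega)
       (show i'+j-k = i'+1+j-(k+1) by omega)).comp
      ((Ak k V W i' j).comp (TensorProduct.map (V.d (i'+1) 0) LinearMap.id))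

/-- The term `A^k_{i,j-1} ∘ (id ⊗ d₀) : V_i ⊗ W_j → V_{i+j-(k+1)} ⊗ W_{i+j-(k+1)}`
(zero if `j = 0`). -/
def Aid0Term (k : ℕ) (V W : SVS) (i j : ℕ) :
    TT V W i j →ₗ[ZMod 2] TT V W (i+j-(k+1)) (i+j-(k+1)) :=
  match j with
  | 0 => 0
  | j'+1 =>
    (tcast V W (show i+j'-k = i+(j'+1)-(k+1) by omega)
       (show i+j'-k = i+(j'+1)-(k+1) by omega)).comp
      ((Ak k V W i j').comp (TensorProduct.map LinearMap.id (W.d (j'+1) 0)))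

/-- The index set `V(q,i)`: pairs `(μ, ν)` of `i`-element subsets of
`{q-i, …, q+i-1}`, disjoint with union everything, and `q-i ∈ μ`
(i.e. `μ₁ = q-i` for the increasing enumerations). -/
def deltaSet (q i : ℕ) : Finset (Finset ℕ × Finset ℕ) :=
  ((Finset.Ico (q-i) (q+i)).powersetCard i ×ˢ (Finset.Ico (q-i) (q+i)).powersetCard i).filter
    fun p => Disjoint p.1 p.2 ∧ p.1 ∪ p.2 = Finset.Ico (q-i) (q+i) ∧ q-i ∈ p.1

lemma deltaSet_card₁ {q i : ℕ} {p : Finset ℕ × Finset ℕ} (hp : p ∈ deltaSet q i) :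
    p.1.card = i := by
  simp only [deltaSet, Finset.mem_filter, Finset.mem_product, Finset.mem_powersetCard] at hp
  exact hp.1.1.2

lemma deltaSet_card₂ {q i : ℕ} {p : Finset ℕ × Finset ℕ} (hp : p ∈ deltaSet q i) :
    p.2.card = i := by
  simp only [deltaSet, Finset.mem_filter, Finset.mem_product, Finset.mem_powersetCard] at hp
  exact hp.1.2.2

/-- Data of a simplicial commutative `F₂`-algebra: a family of commutative
`ZMod 2`-algebras with face and degeneracy maps which are algebra maps;
the simplicial identities are required via `SAlg.IsSimplicial`. -/
structure SAlg : Type 1 where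
  X : ℕ → Type
  ring : ∀ n, CommRing (X n)
  alg : ∀ n, Algebra (ZMod 2) (X n)
  d : ∀ n, ℕ → (X n →ₐ[ZMod 2] X (n - 1))
  s : ∀ n, ℕ → (X n →ₐ[ZMod 2] X (n + 1))

attribute [instance] SAlg.ring SAlg.alg

namespace SAlg

def acast (R : SAlg) {m n : ℕ} (h : m = n) : R.X m →ₐ[ZMod 2] R.X n := by
  subst h; exact AlgHom.id _ _

structure IsSimplicial (R : SAlg) : Prop where
  dd : ∀ n i j, i < j → j ≤ n + 2 →
    (R.d (n+1) i).comp (R.d (n+2) j) = (R.d (n+1) (j-1)).comp (R.d (n+2) i)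
  ss : ∀ n i j, i ≤ j → j ≤ n →
    (R.s (n+1) i).comp (R.s n j) = (R.s (n+1) (j+1)).comp (R.s n i)
  ds_lt : ∀ n i j, i < j → j ≤ n + 1 →
    (R.d (n+2) i).comp (R.s (n+1) j) = (R.s n (j-1)).comp (R.d (n+1) i)
  ds_eq : ∀ n i j, (i = j ∨ i = j + 1) → j ≤ n →
    (R.d (n+1) i).comp (R.s n j) = AlgHom.id _ _
  ds_gt : ∀ n i j, j + 1 < i → i ≤ n + 2 →
    (R.d (n+2) i).comp (R.s (n+1) j) = (R.s n j).comp (R.d (n+1) (i-1))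

/-- The underlying simplicial `F₂`-vector space of a simplicial `F₂`-algebra. -/
def toSVS (R : SAlg) : SVS where
  X := R.X
  grp := fun n => inferInstance
  mod := fun n => inferInstance
  d := fun n j => (R.d n j).toLinearMap
  s := fun n j => (R.s n j).toLinearMap

end SAlg

/-- Iterated degeneracies for a simplicial algebra (head of the list applied first). -/
def sIterA (R : SAlg) : (l : List ℕ) → (q : ℕ) → (R.X q →ₐ[ZMod 2] R.X (q + l.length))
  | [], _ => AlgHom.id _ _
  | a :: t, q =>
    (R.acast (show q + 1 + t.length = q + (t.length + 1) by omega)).comp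
      ((sIterA R t (q+1)).comp (R.s q a))

def sIterATo (R : SAlg) (q m : ℕ) (l : List ℕ) (h : q + l.length = m) :
    R.X q →ₐ[ZMod 2] R.X m :=
  (R.acast h).comp (sIterA R l q)

/-- The explicit formula
`δ_i(z) = Σ_{(μ,ν) ∈ V(q,i)} s_{ν_i}⋯s_{ν_1}(z) · s_{μ_i}⋯s_{μ_1}(z) ∈ R_{q+i}`. -/
def deltaOp (R : SAlg) (q i : ℕ) (z : R.X q) : R.X (q+i) :=
  ∑ p ∈ (deltaSet q i).attach,
    (sIterATo R q (q+i) (sortAsc p.1.2)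
        (by rw [length_sortAsc, deltaSet_card₂ p.2]) z)
      * (sIterATo R q (q+i) (sortAsc p.1.1)
        (by rw [length_sortAsc, deltaSet_card₁ p.2]) z)

/-- Multiplication `μ : R_m ⊗ R_m → R_m` as a linear map. -/
def mulMap (R : SAlg) (m : ℕ) :
    TensorProduct (ZMod 2) (R.X m) (R.X m) →ₗ[ZMod 2] R.X m :=
  TensorProduct.lift (LinearMap.mul (ZMod 2) (R.X m))

open SimplexCategory CategoryTheory in
/-- The suspension `S′(α)` of a morphism `α : [m] → [n]` in the simplex category:
`S′(α)(0) = 0` and `S′(α)(i) = α(i-1) + 1` for `i ≥ 1`. -/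
def suspMor {x y : SimplexCategory} (f : x ⟶ y) :
    SimplexCategory.mk (x.len + 1) ⟶ SimplexCategory.mk (y.len + 1) :=
  SimplexCategory.mkHom
    { toFun := fun i => Fin.cases 0 (fun i' => (f.toOrderHom i').succ) i
      monotone' := by
        intro a b hab
        induction a using Fin.cases with
        | zero => simp [Fin.zero_le]
        | succ a' =>
          induction b using Fin.cases with
          | zero =>
            exact absurd (Fin.le_zero_iff.mp hab) (Fin.succ_ne_zero a')
          | succ b' =>
            simp only [Fin.cases_succ]
            exact Fin.succ_le_succ_iff.mpr
              (f.toOrderHom.monotone (Fin.succ_le_succ_iff.mp hab)) }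

open SimplexCategory CategoryTheory in
/-- The suspension functor `S′ : Δ → Δ`, `[n] ↦ [n+1]`,
`(S′α)(0) = 0`, `(S′α)(i) = α(i-1)+1` for `i ≥ 1`. -/
def suspFunctor : CategoryTheory.Functor SimplexCategory SimplexCategory where
  obj x := SimplexCategory.mk (x.len + 1)
  map f := suspMor f
  map_id x := by
    apply SimplexCategory.Hom.ext
    ext i
    induction i using Fin.cases with
    | zero => rfl
    | succ i' => rfl
  map_comp f g := by
    apply SimplexCategory.Hom.ext
    ext i
    induction i using Fin.cases with
    | zero => rfl
    | succ i' => rfl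

open SVS in
/-- The term `S(δ ∘ D_{i-1,j}) ∘ (id ⊗ s₀) : V_i ⊗ W_j → V_{i+j-1} ⊗ W_{i+j-1}`,
i.e. the suspension of the composite `δ ∘ D_{i-1,j} : V_{i-1} ⊗ W_j → V_{i+j-2} ⊗ W_{i+j-2}`
(evaluated at the suspended simplicial vector spaces), precomposed with `id ⊗ s₀`;
any term involving a negative index is zero. -/
def SdelDTerm (V W : SVS) (i j : ℕ) : TT V W i j →ₗ[ZMod 2] TT V W (i+j-1) (i+j-1) :=
  match i with
  | 0 => 0
  | i'+1 =>
    if h : 1 ≤ i' + j then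
      ((tcast V W (show i'+j-1+1 = i'+1+j-1 by omega) (show i'+j-1+1 = i'+1+j-1 by omega)).comp
        ((delMap (susp V) (susp W) (i'+j) (i'+j)).comp
          (Dmap (susp V) (susp W) i' j))).comp
        (TensorProduct.map LinearMap.id (W.s j 0))
    else 0

/-- The term `D_{i-1,j} ∘ (d₀ ⊗ id) : V_i ⊗ W_j → V_{i+j-1} ⊗ W_{i+j-1}`
(zero if `i = 0`). -/
def Dd0Term (V W : SVS) (i j : ℕ) : TT V W i j →ₗ[ZMod 2] TT V W (i+j-1) (i+j-1) :=
  match i with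
  | 0 => 0
  | i'+1 =>
    (tcast V W (show i'+j = i'+1+j-1 by omega) (show i'+j = i'+1+j-1 by omega)).comp
      ((Dmap V W i' j).comp (TensorProduct.map (V.d (i'+1) 0) LinearMap.id))


/-! On `z ⊗ w` with `d_j z = d_j w = 0` for `j < k`, all `d₀`-correction terms in the
recursion for `D^k` vanish, so `D^k` acts as the `k`-fold suspension of
`D⁰ = S(D) ∘ (id ⊗ s₀)`: a sum over shuffles `(μ, ν)` of `s_{ν + k + 1} z ⊗ s_{μ + k + 1} s_k w`.
For `k = q - i` the pairs `(k :: (μ + k + 1), ν + k + 1)` run exactly once through `V(q, i)`,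
and multiplying the two factors gives `δ_i(z)`. -/

namespace SVS

lemma xcast_xcast (V : SVS) {a b c : ℕ} (h₁ : a = b) (h₂ : b = c) (x : V.X a) :
    V.xcast h₂ (V.xcast h₁ x) = V.xcast (h₁.trans h₂) x := by
  subst h₁ h₂; rfl

end SVS

section Degeneracies

variable (V : SVS)

lemma sIterTo_cons {q m : ℕ} (a : ℕ) (t : List ℕ) (h : q + (a :: t).length = m)
    (h' : q + 1 + t.length = m) (x : V.X q) :
    sIterTo V q m (a :: t) h x = sIterTo V (q + 1) m t h' (V.s q a x) :=
  V.xcast_xcast _ _ _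

lemma sIterTo_congr {q m : ℕ} {l l' : List ℕ} (hl : l = l') (h : q + l.length = m)
    (h' : q + l'.length = m) (x : V.X q) :
    sIterTo V q m l h x = sIterTo V q m l' h' x := by
  subst hl; rfl

lemma sIterTo_susp (l : List ℕ) : ∀ {n m : ℕ} (h : n + l.length = m)
    (h' : n + 1 + (l.map (· + 1)).length = m + 1) (x : V.X (n + 1)),
    sIterTo (SVS.susp V) n m l h x = sIterTo V (n + 1) (m + 1) (l.map (· + 1)) h' x := by
  induction l with
  | nil => intro n m h h' x; subst h; rfl
  | cons a t ih =>
    intro n m h h' x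
    have h₁ : n + 1 + t.length = m := by simp only [List.length_cons] at h; omega
    have h₂ : n + 2 + (t.map (· + 1)).length = m + 1 := by simp only [List.length_map]; omega
    exact (sIterTo_cons _ a t h h₁ x).trans
      ((ih h₁ h₂ _).trans (sIterTo_cons _ (a + 1) _ h' h₂ x).symm)

lemma xcast_sIterTo_susp (l : List ℕ) {n m m' : ℕ} (h : n + l.length = m) (h' : m + 1 = m')
    (h'' : n + 1 + (l.map (· + 1)).length = m') (x : (SVS.susp V).X n) :
    V.xcast h' (sIterTo (SVS.susp V) n m l h x) = sIterTo V (n + 1) m' (l.map (· + 1)) h'' x := by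
  subst h'
  exact sIterTo_susp V l h h'' x

end Degeneracies

section EilenbergMacLane

variable (V W : SVS)

lemma tcast_tmul {a b c e : ℕ} (h₁ : a = c) (h₂ : b = e) (x : V.X a) (y : W.X b) :
    tcast V W h₁ h₂ (x ⊗ₜ[ZMod 2] y) = V.xcast h₁ x ⊗ₜ W.xcast h₂ y :=
  TensorProduct.map_tmul _ _ _ _

lemma Dmap_tmul {i j : ℕ} (x : V.X i) (y : W.X j) :
    Dmap V W i j (x ⊗ₜ y) = ∑ p ∈ (shuffles i j).attach,
      sIterTo V i (i + j) (sortAsc p.1.2) (by rw [length_sortAsc, shuffles_card₂ p.2]) x ⊗ₜ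
        sIterTo W j (i + j) (sortAsc p.1.1)
          (by rw [length_sortAsc, shuffles_card₁ p.2]; omega) y := by
  simp only [Dmap, LinearMap.sum_apply, TensorProduct.map_tmul]

lemma D0_succ_tmul {a b : ℕ} (x : V.X (a + 1)) (y : W.X b) :
    D0 V W (a + 1) b (x ⊗ₜ y) = ∑ p ∈ (shuffles a b).attach,
      sIterTo V (a + 1) (a + 1 + b) ((sortAsc p.1.2).map (· + 1))
          (by rw [List.length_map, length_sortAsc, shuffles_card₂ p.2]) x ⊗ₜ
        sIterTo W b (a + 1 + b) (0 :: (sortAsc p.1.1).map (· + 1))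
          (by simp only [List.length_cons, List.length_map, length_sortAsc,
            shuffles_card₁ p.2]; omega) y := by
  change tcast V W _ _ (Dmap (SVS.susp V) (SVS.susp W) a b
    (TensorProduct.tmul (ZMod 2) (M := (SVS.susp V).X a) x (W.s b 0 y))) = _
  erw [Dmap_tmul, map_sum]
  refine Finset.sum_congr rfl fun p _ => ?_
  erw [tcast_tmul]
  congr 1
  · exact xcast_sIterTo_susp V _ _ _ _ x
  · refine (xcast_sIterTo_susp W _ _ _ ?_ _).trans (sIterTo_cons W _ _ _ _ y).symm
    simp only [List.length_map, length_sortAsc, shuffles_card₁ p.2]; omega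

lemma Dk_succ_tmul_of_d_zero_eq_zero (k : ℕ) {a b : ℕ} (hk : k ≤ a + b) (x : V.X (a + 1))
    (y : W.X (b + 1)) (hx : V.d (a + 1) 0 x = 0) (hy : W.d (b + 1) 0 y = 0) :
    Dk (k + 1) V W (a + 1) (b + 1) (x ⊗ₜ y) =
      tcast V W (show a + b - k + 1 = a + 1 + (b + 1) - (k + 1) by omega)
        (show a + b - k + 1 = a + 1 + (b + 1) - (k + 1) by omega)
        (Dk k (SVS.susp V) (SVS.susp W) a b (x ⊗ₜ y)) := by
  rw [Dk, LinearMap.add_apply, dif_pos hk]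
  split_ifs <;> simp only [LinearMap.coe_comp, Function.comp_apply, TensorProduct.map_tmul,
    LinearMap.id_coe, id_eq, hx, hy, TensorProduct.zero_tmul, TensorProduct.tmul_zero, map_zero,
    add_zero] <;> rfl

end EilenbergMacLane

/-- The right-hand side is `S^k(D⁰_{a+1,b+1})(x ⊗ y)`. -/
theorem Dk_tmul_of_d_eq_zero {V W : SVS} (k a b : ℕ) {A B : ℕ} (hA : A = a + k + 1)
    (hB : B = b + k + 1) (x : V.X A) (y : W.X B) (hx : ∀ j < k, V.d A j x = 0)
    (hy : ∀ j < k, W.d B j y = 0) :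
    Dk k V W A B (x ⊗ₜ y) = ∑ p ∈ (shuffles a (b + 1)).attach,
      sIterTo V A (A + B - k) ((sortAsc p.1.2).map (· + (k + 1)))
          (by rw [List.length_map, length_sortAsc, shuffles_card₂ p.2]; omega) x ⊗ₜ
        sIterTo W B (A + B - k) (k :: (sortAsc p.1.1).map (· + (k + 1)))
          (by simp only [List.length_cons, List.length_map, length_sortAsc,
            shuffles_card₁ p.2]; omega) y := by
  subst hA hB
  induction k generalizing V W a b with
  | zero => exact D0_succ_tmul V W x y
  | succ k ih =>
    refine (Dk_succ_tmul_of_d_zero_eq_zero V W k (a := a + k + 1) (b := b + k + 1) (by omega)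
      x y (hx 0 k.succ_pos) (hy 0 k.succ_pos)).trans ?_
    erw [ih (V := SVS.susp V) (W := SVS.susp W) a b (x := x) (y := y)
      (hx := fun j hj => hx (j + 1) (by omega)) (hy := fun j hj => hy (j + 1) (by omega)),
      map_sum]
    refine Finset.sum_congr rfl fun p _ => ?_
    erw [tcast_tmul]
    congr 1
    · refine (xcast_sIterTo_susp V _ _ _ ?_ x).trans (sIterTo_congr V ?_ _ _ x)
      · simp only [List.length_map, length_sortAsc, shuffles_card₂ p.2]; omega
      · simp only [List.map_map]; rfl
    · refine (xcast_sIterTo_susp W _ _ _ ?_ y).trans (sIterTo_congr W ?_ _ _ y)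
      · simp only [List.length_cons, List.length_map, length_sortAsc, shuffles_card₁ p.2]; omega
      · simp only [List.map_cons, List.map_map]; rfl

section ShuffleShift

open Finset

lemma mem_shuffles {i j : ℕ} {p : Finset ℕ × Finset ℕ} :
    p ∈ shuffles i j ↔ #p.1 = i ∧ #p.2 = j ∧ Disjoint p.1 p.2 ∧ p.1 ∪ p.2 = range (i + j) := by
  simp only [shuffles, mem_filter, mem_product, mem_powersetCard]
  constructor
  · rintro ⟨⟨⟨-, h₁⟩, -, h₂⟩, h₃, h₄⟩; exact ⟨h₁, h₂, h₃, h₄⟩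
  · rintro ⟨h₁, h₂, h₃, h₄⟩
    exact ⟨⟨⟨h₄ ▸ subset_union_left, h₁⟩, h₄ ▸ subset_union_right, h₂⟩, h₃, h₄⟩

lemma mem_deltaSet {q i : ℕ} {p : Finset ℕ × Finset ℕ} :
    p ∈ deltaSet q i ↔ #p.1 = i ∧ #p.2 = i ∧ Disjoint p.1 p.2 ∧
      p.1 ∪ p.2 = Ico (q - i) (q + i) ∧ q - i ∈ p.1 := by
  simp only [deltaSet, mem_filter, mem_product, mem_powersetCard]
  constructor
  · rintro ⟨⟨⟨-, h₁⟩, -, h₂⟩, h₃, h₄, h₅⟩; exact ⟨h₁, h₂, h₃, h₄, h₅⟩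
  · rintro ⟨h₁, h₂, h₃, h₄, h₅⟩
    exact ⟨⟨⟨h₄ ▸ subset_union_left, h₁⟩, h₄ ▸ subset_union_right, h₂⟩, h₃, h₄, h₅⟩

/-- For `a = q - (n + 1)` this identifies the `(n, n + 1)`-shuffles with `V(q, n + 1)`. -/
def shuffleShift (a : ℕ) (p : Finset ℕ × Finset ℕ) : Finset ℕ × Finset ℕ :=
  (insert a (p.1.map (addRightEmbedding (a + 1))), p.2.map (addRightEmbedding (a + 1)))

lemma notMem_map_addRightEmbedding_succ (a : ℕ) (s : Finset ℕ) :
    a ∉ s.map (addRightEmbedding (a + 1)) := by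
  simp only [mem_map, addRightEmbedding_apply, not_exists, not_and]
  omega

lemma shuffleShift_injective (a : ℕ) : Function.Injective (shuffleShift a) := by
  rintro ⟨μ, ν⟩ ⟨μ', ν'⟩ h
  simp only [shuffleShift, Prod.mk.injEq] at h
  have hμ := congrArg (erase · a) h.1
  simp only [erase_insert (notMem_map_addRightEmbedding_succ a _), map_inj] at hμ
  rw [hμ, map_inj.mp h.2]

variable {q n : ℕ}

lemma map_range_addRightEmbedding (hq : n + 1 ≤ q) :
    (range (n + (n + 1))).map (addRightEmbedding (q - (n + 1) + 1)) =
      Ico (q - (n + 1) + 1) (q + (n + 1)) := by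
  rw [range_eq_Ico, map_add_right_Ico]
  congr 1 <;> omega

lemma shuffleShift_mem_deltaSet (hq : n + 1 ≤ q) {p : Finset ℕ × Finset ℕ}
    (hp : p ∈ shuffles n (n + 1)) : shuffleShift (q - (n + 1)) p ∈ deltaSet q (n + 1) := by
  obtain ⟨h₁, h₂, hdisj, hunion⟩ := mem_shuffles.mp hp
  refine mem_deltaSet.mpr ⟨?_, ?_, ?_, ?_, mem_insert_self _ _⟩
  · rw [shuffleShift, card_insert_of_notMem (notMem_map_addRightEmbedding_succ _ _), card_map,
      h₁]
  · rw [shuffleShift, card_map, h₂]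
  · rw [shuffleShift, disjoint_insert_left]
    exact ⟨notMem_map_addRightEmbedding_succ _ _, disjoint_map _ |>.mpr hdisj⟩
  · rw [shuffleShift, insert_union, ← map_union, hunion, map_range_addRightEmbedding hq,
      insert_Ico_add_one_left_eq_Ico (by omega)]

lemma exists_shuffleShift_eq (hq : n + 1 ≤ q) {P : Finset ℕ × Finset ℕ}
    (hP : P ∈ deltaSet q (n + 1)) :
    ∃ p ∈ shuffles n (n + 1), shuffleShift (q - (n + 1)) p = P := by
  obtain ⟨h₁, h₂, hdisj, hunion, hmem⟩ := mem_deltaSet.mp hP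
  have hrest : P.1.erase (q - (n + 1)) ∪ P.2 = Ico (q - (n + 1) + 1) (q + (n + 1)) := by
    rw [← erase_eq_of_notMem (disjoint_left.mp hdisj hmem), ← erase_union_distrib, hunion,
      Ico_erase_left, Ico_add_one_left_eq_Ioo]
  obtain ⟨μ, -, hμ⟩ := subset_map_iff.mp
    (map_range_addRightEmbedding hq ▸ hrest ▸ subset_union_left : P.1.erase (q - (n + 1)) ⊆ _)
  obtain ⟨ν, -, hν⟩ := subset_map_iff.mp
    (map_range_addRightEmbedding hq ▸ hrest ▸ subset_union_right : P.2 ⊆ _)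
  refine ⟨(μ, ν), mem_shuffles.mpr ⟨?_, ?_, ?_, ?_⟩, ?_⟩
  · rw [← card_map (addRightEmbedding (q - (n + 1) + 1)), ← hμ, card_erase_of_mem hmem, h₁,
      Nat.add_sub_cancel]
  · rw [← card_map (addRightEmbedding (q - (n + 1) + 1)), ← hν, h₂]
  · rw [← disjoint_map (addRightEmbedding (q - (n + 1) + 1)), ← hμ, ← hν]
    exact disjoint_of_subset_left (erase_subset _ _) hdisj
  · rw [← map_inj (f := addRightEmbedding (q - (n + 1) + 1)), map_union, ← hμ, ← hν, hrest,
      map_range_addRightEmbedding hq]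
  · simp only [shuffleShift, ← hμ, ← hν, insert_erase hmem]

lemma sortAsc_shuffleShift_fst (a : ℕ) (p : Finset ℕ × Finset ℕ) :
    sortAsc (shuffleShift a p).1 = a :: (sortAsc p.1).map (· + (a + 1)) := by
  rw [shuffleShift, sortAsc,
    sort_insert _ (fun b hb => ?_) (notMem_map_addRightEmbedding_succ a _)]
  · congr 1
    exact (map_sort _ _ _ _ fun _ _ _ _ => (add_le_add_iff_right _).symm).symm
  · obtain ⟨c, -, rfl⟩ := mem_map.mp hb
    simp only [addRightEmbedding_apply]
    omega

lemma sortAsc_shuffleShift_snd (a : ℕ) (p : Finset ℕ × Finset ℕ) :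
    sortAsc (shuffleShift a p).2 = (sortAsc p.2).map (· + (a + 1)) :=
  (map_sort _ _ _ _ fun _ _ _ _ => (add_le_add_iff_right _).symm).symm

end ShuffleShift

lemma SAlg.acast_eq_xcast (R : SAlg) {m n : ℕ} (h : m = n) (x : R.X m) :
    R.acast h x = R.toSVS.xcast h x := by
  subst h; rfl

lemma sIterA_eq_sIter (R : SAlg) (l : List ℕ) : ∀ {q : ℕ} (z : R.X q),
    sIterA R l q z = sIter R.toSVS l q z := by
  induction l with
  | nil => intro q z; rfl
  | cons a t ih => intro q z; exact (R.acast_eq_xcast _ _).trans (congrArg _ (ih _))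

lemma sIterATo_eq_sIterTo (R : SAlg) {q m : ℕ} (l : List ℕ) (h : q + l.length = m) (z : R.X q) :
    sIterATo R q m l h z = sIterTo R.toSVS q m l h z :=
  (R.acast_eq_xcast _ _).trans (congrArg _ (sIterA_eq_sIter R l z))

lemma mulMap_tcast_sIterTo_tmul (R : SAlg) {q m₀ m : ℕ} (h : m₀ = m) {l₁ l₂ l₁' l₂' : List ℕ}
    (h₁ : l₁ = l₁') (h₂ : l₂ = l₂') (hl₁ : q + l₁.length = m₀) (hl₂ : q + l₂.length = m₀)
    (hl₁' : q + l₁'.length = m) (hl₂' : q + l₂'.length = m) (z : R.X q) :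
    mulMap R m (tcast R.toSVS R.toSVS h h
      (sIterTo R.toSVS q m₀ l₁ hl₁ z ⊗ₜ sIterTo R.toSVS q m₀ l₂ hl₂ z)) =
      sIterATo R q m l₁' hl₁' z * sIterATo R q m l₂' hl₂' z := by
  subst h h₁ h₂
  exact congrArg₂ (· * ·) (sIterATo_eq_sIterTo R _ _ z).symm (sIterATo_eq_sIterTo R _ _ z).symm

theorem stmt_6 (R : SAlg) (q i : ℕ) (h2 : 2 ≤ i) (hiq : i ≤ q)
    (z : R.X q) (hz : ∀ j ≤ q, R.d q j z = 0) :
    mulMap R (q+i)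
      ((tcast R.toSVS R.toSVS (show q+q-(q-i) = q+i by omega) (show q+q-(q-i) = q+i by omega))
        ((Dk (q-i) R.toSVS R.toSVS q q) (z ⊗ₜ[ZMod 2] z)))
    = deltaOp R q i z := by
  obtain ⟨n, rfl⟩ : ∃ n, i = n + 1 := ⟨i - 1, by omega⟩
  erw [Dk_tmul_of_d_eq_zero (V := R.toSVS) (W := R.toSVS) (q - (n + 1)) n n (by omega)
    (by omega) z z (fun j _ => hz j (by omega)) (fun j _ => hz j (by omega)), map_sum, map_sum]
  refine Finset.sum_bij
    (fun p _ => ⟨shuffleShift (q - (n + 1)) p.1, shuffleShift_mem_deltaSet hiq p.2⟩)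
    (fun _ _ => Finset.mem_attach _ _)
    (fun p _ p' _ h => Subtype.ext (shuffleShift_injective _ (congrArg Subtype.val h)))
    (fun P _ => ?_) (fun p _ => ?_)
  · obtain ⟨p, hp, hP⟩ := exists_shuffleShift_eq hiq P.2
    exact ⟨⟨p, hp⟩, Finset.mem_attach _ _, Subtype.ext hP⟩
  · exact mulMap_tcast_sIterTo_tmul R _ (sortAsc_shuffleShift_snd _ _).symm
      (sortAsc_shuffleShift_fst _ _).symm _ _ _ _ z
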